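/- For any CPTP map Φ on an N-dimensional system and any q > 1, the Rényi entropies satisfy S_q^map(Φ) + S_q^rec(Φ) ≥ (F_min/2) ln N, where F_min = min(q/(q−1), 2); and if Φ is additionally unital, S_q^map(Φ) + S_q^rec(Φ) ≥ F_min · ln N. -/

import Mathlib

open Matrix
open scoped BigOperators Kronecker ComplexOrder

noncomputable section

/-- Singular values of a square complex matrix: square roots of eigenvalues of `X * Xᴴ`. -/
def singularValues {n : Type*} [Fintype n] [DecidableEq n] (X : Matrix n n ℂ) : n → ℝ :=
  fun i => Real.sqrt ((Matrix.posSemidef_self_mul_conjTranspose X).1.eigenvalues i)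

/-- Shannon entropy of the normalization of a nonnegative vector. -/
def shannonH {ι : Type*} [Fintype ι] (v : ι → ℝ) : ℝ :=
  -∑ i, (v i / ∑ j, v j) * Real.log (v i / ∑ j, v j)

/-- Rényi entropy of order `q` of the normalization of a nonnegative vector. -/
def renyiH {ι : Type*} [Fintype ι] (q : ℝ) (v : ι → ℝ) : ℝ :=
  (1 / (1 - q)) * Real.log (∑ i, (v i / ∑ j, v j) ^ q)

/-- Unnormalized (von Neumann–type) entropy of the singular value vector. -/
def vnEntropy {n : Type*} [Fintype n] [DecidableEq n] (M : Matrix n n ℂ) : ℝ :=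
  -∑ i, singularValues M i * Real.log (singularValues M i)

/-- A quantum channel: completely positive (Kraus form) and trace preserving. -/
def IsCPTP {N : ℕ} (Φ : Matrix (Fin N) (Fin N) ℂ →ₗ[ℂ] Matrix (Fin N) (Fin N) ℂ) : Prop :=
  ∃ (k : ℕ) (A : Fin k → Matrix (Fin N) (Fin N) ℂ),
    (∀ ρ, Φ ρ = ∑ i, A i * ρ * (A i)ᴴ) ∧ (∑ i, (A i)ᴴ * A i = 1)

/-- Density matrix predicate. -/
def IsDensityMatrix {n : Type*} [Fintype n] [DecidableEq n] (ρ : Matrix n n ℂ) : Prop :=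
  ρ.PosSemidef ∧ ρ.trace = 1

/-- The Choi (dynamical) matrix of a linear map on matrices. -/
def choiMatrix {N : ℕ} (Φ : Matrix (Fin N) (Fin N) ℂ →ₗ[ℂ] Matrix (Fin N) (Fin N) ℂ) :
    Matrix (Fin N × Fin N) (Fin N × Fin N) ℂ :=
  fun p q => Φ (Matrix.single p.2 q.2 1) p.1 q.1

/-- The superoperator matrix of a linear map on matrices. -/
def superMatrix {N : ℕ} (Φ : Matrix (Fin N) (Fin N) ℂ →ₗ[ℂ] Matrix (Fin N) (Fin N) ℂ) :
    Matrix (Fin N × Fin N) (Fin N × Fin N) ℂ :=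
  fun p q => Φ (Matrix.single q.1 q.2 1) p.1 p.2

/-- Hilbert–Schmidt norm of a matrix. -/
def hsNorm {n : Type*} [Fintype n] [DecidableEq n] (M : Matrix n n ℂ) : ℝ :=
  Real.sqrt ((M * Mᴴ).trace.re)

/-- Largest singular value of the superoperator of `Φ`, as the operator norm w.r.t. HS norm. -/
def sigma1 {N : ℕ} (Φ : Matrix (Fin N) (Fin N) ℂ →ₗ[ℂ] Matrix (Fin N) (Fin N) ℂ) : ℝ :=
  sSup {r : ℝ | ∃ M : Matrix (Fin N) (Fin N) ℂ, hsNorm M = 1 ∧ r = hsNorm (Φ M)}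

/-- Sum of the (at most) `m` largest entries of a nonnegative vector. -/
def partialMax {ι : Type*} [Fintype ι] (v : ι → ℝ) (m : ℕ) : ℝ :=
  sSup {t : ℝ | ∃ s : Finset ι, s.card ≤ m ∧ t = ∑ i ∈ s, v i}

/-- `Majorizes w v` means `v ≺ w` (for nonnegative vectors, possibly of different lengths). -/
def Majorizes {ι κ : Type*} [Fintype ι] [Fintype κ] (w : ι → ℝ) (v : κ → ℝ) : Prop :=
  (∑ i, v i = ∑ i, w i) ∧ ∀ m : ℕ, partialMax v m ≤ partialMax w m



/-!
The Choi matrix `D` of a channel with Kraus operators `Aᵢ` is positive semidefinite of trace `N`,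
so its singular values sum to `N`, and the superoperator `X` is a reshuffling of `D`, so both have
the same Frobenius norm `c = ∑ σᵢ(D)² = ∑ σᵢ(X)²`. For `q > 1` the Rényi entropy dominates
`F_min / 2` times the collision entropy `H₂ = log ((∑ σᵢ)² / ∑ σᵢ²)`, so
`H_q(D) ≥ F_min / 2 · log (N² / c)`. If `⟨w, Φ 𝟙 w⟩ ≤ β ‖w‖²`, the Kraus form gives
`‖Φ M‖² ≤ β ‖M‖²`, hence `σᵢ(X)² ≤ β`, so `c ≤ √β ∑ σᵢ(X)` and `H_q(X) ≥ F_min / 2 · log (c / β)`.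
Adding, the unknown `c` cancels. Finally `β = N` always works since `Φ 𝟙` has trace `N`, and
`β = 1` for unital channels.
-/

section SquaredNorms

variable {ι κ : Type*} [Fintype ι] [Fintype κ]

def vecNormSq (v : ι → ℂ) : ℝ := ∑ i, ‖v i‖ ^ 2

def frobNormSq (M : Matrix ι κ ℂ) : ℝ := ∑ a, ∑ b, ‖M a b‖ ^ 2

lemma vecNormSq_nonneg (v : ι → ℂ) : 0 ≤ vecNormSq v := by
  unfold vecNormSq; positivity

lemma vecNormSq_real_smul (r : ℝ) (v : ι → ℂ) : vecNormSq (r • v) = r ^ 2 * vecNormSq v := by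
  simp [vecNormSq, mul_pow, Finset.mul_sum]

lemma star_dotProduct_self_eq_vecNormSq (v : ι → ℂ) : star v ⬝ᵥ v = (vecNormSq v : ℂ) := by
  simp [dotProduct, vecNormSq, Complex.conj_mul']

lemma norm_star_dotProduct_le (a b : ι → ℂ) :
    ‖star a ⬝ᵥ b‖ ≤ √(vecNormSq a) * √(vecNormSq b) :=
  calc ‖star a ⬝ᵥ b‖ ≤ ∑ i, ‖a i‖ * ‖b i‖ := by
        simpa [dotProduct] using norm_sum_le Finset.univ fun i => star (a i) * b i
    _ ≤ √(vecNormSq a) * √(vecNormSq b) := Real.sum_mul_le_sqrt_mul_sqrt _ _ _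

lemma vecNormSq_mulVec_le (Y : Matrix ι κ ℂ) (w : κ → ℂ) :
    vecNormSq (Y *ᵥ w) ≤ frobNormSq Y * vecNormSq w := by
  rw [vecNormSq, frobNormSq, Finset.sum_mul]
  refine Finset.sum_le_sum fun a _ => ?_
  calc ‖(Y *ᵥ w) a‖ ^ 2 ≤ (∑ b, ‖Y a b‖ * ‖w b‖) ^ 2 := by
        gcongr
        simpa [mulVec, dotProduct] using norm_sum_le Finset.univ fun b => Y a b * w b
    _ ≤ (∑ b, ‖Y a b‖ ^ 2) * vecNormSq w := Finset.sum_mul_sq_le_sq_mul_sq _ _ _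

lemma star_dotProduct_mul_conjTranspose_mulVec (Y : Matrix ι κ ℂ) (v : ι → ℂ) :
    star v ⬝ᵥ (Y * Yᴴ) *ᵥ v = (vecNormSq (Yᴴ *ᵥ v) : ℂ) := by
  rw [← mulVec_mulVec, dotProduct_mulVec, ← star_dotProduct_self_eq_vecNormSq, star_mulVec,
    conjTranspose_conjTranspose]

lemma frobNormSq_eq_trace (M : Matrix ι κ ℂ) : (frobNormSq M : ℂ) = (M * Mᴴ).trace := by
  simp [frobNormSq, trace, mul_apply, Complex.mul_conj']

lemma frobNormSq_eq_sum_vecNormSq_col (M : Matrix ι κ ℂ) :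
    frobNormSq M = ∑ b, vecNormSq fun a => M a b :=
  Finset.sum_comm

lemma frobNormSq_conjTranspose (M : Matrix ι κ ℂ) : frobNormSq Mᴴ = frobNormSq M := by
  simp [frobNormSq, Finset.sum_comm (γ := ι)]

end SquaredNorms

section SingularValues

variable {n : Type*} [Fintype n] [DecidableEq n]

lemma singularValues_nonneg (X : Matrix n n ℂ) (i : n) : 0 ≤ singularValues X i :=
  Real.sqrt_nonneg _

lemma sq_singularValues (X : Matrix n n ℂ) (i : n) :
    singularValues X i ^ 2 = (posSemidef_self_mul_conjTranspose X).1.eigenvalues i :=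
  Real.sq_sqrt ((posSemidef_self_mul_conjTranspose X).eigenvalues_nonneg i)

lemma sum_sq_singularValues (X : Matrix n n ℂ) :
    ∑ i, singularValues X i ^ 2 = frobNormSq X := by
  have h := (posSemidef_self_mul_conjTranspose X).1.trace_eq_sum_eigenvalues
  rw [← frobNormSq_eq_trace] at h
  simp_rw [sq_singularValues]
  exact Complex.ofReal_injective (by push_cast; exact h.symm)

lemma Matrix.IsHermitian.trace_cfc {A : Matrix n n ℂ} (hA : A.IsHermitian) (f : ℝ → ℝ) :
    (hA.cfc f).trace = ∑ i, (f (hA.eigenvalues i) : ℂ) := by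
  rw [IsHermitian.cfc, Unitary.conjStarAlgAut_apply, trace_mul_cycle, Unitary.coe_star_mul_self,
    one_mul, trace_diagonal]
  rfl

lemma sum_singularValues_of_posSemidef {D : Matrix n n ℂ} (hD : D.PosSemidef) :
    ∑ i, singularValues D i = D.trace.re := by
  have hP := posSemidef_self_mul_conjTranspose D
  have hsqrt : hP.1.cfc Real.sqrt = D := by
    open scoped MatrixOrder in
    rw [← hP.1.cfc_eq, ← cfcₙ_eq_cfc, ← CFC.sqrt_eq_real_sqrt _ hP.nonneg]
    conv_lhs => rw [hD.1.eq, ← sq, CFC.sqrt_sq D hD.nonneg]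
  calc ∑ i, singularValues D i = (hP.1.cfc Real.sqrt).trace.re := by
        rw [hP.1.trace_cfc]; simp [singularValues]
    _ = D.trace.re := by rw [hsqrt]

/-- If `X Xᴴ w = λ w` with `‖w‖ = 1`, then `‖Xᴴ w‖² = λ` and `‖X Xᴴ w‖² = λ²`, so testing the bound
on `Xᴴ w` gives `λ² ≤ β λ`. -/
lemma sq_singularValues_le {X : Matrix n n ℂ} {β : ℝ} (hβ : 0 ≤ β)
    (hX : ∀ v, vecNormSq (X *ᵥ v) ≤ β * vecNormSq v) (i : n) :
    singularValues X i ^ 2 ≤ β := by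
  set hH := (posSemidef_self_mul_conjTranspose X).1
  set w : n → ℂ := ⇑(hH.eigenvectorBasis i)
  have hw : vecNormSq w = 1 := by
    have h := hH.eigenvectorBasis.orthonormal.1 i
    rwa [EuclideanSpace.norm_eq, Real.sqrt_eq_one] at h
  have hev : hH.eigenvalues i = vecNormSq (Xᴴ *ᵥ w) := by
    rw [hH.eigenvalues_eq, star_dotProduct_mul_conjTranspose_mulVec]
    rfl
  have hev_sq : vecNormSq (X *ᵥ Xᴴ *ᵥ w) = hH.eigenvalues i ^ 2 := by
    rw [mulVec_mulVec, hH.mulVec_eigenvectorBasis, vecNormSq_real_smul, hw, mul_one]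
  have hbound := hX (Xᴴ *ᵥ w)
  rw [hev_sq, ← hev] at hbound
  rw [sq_singularValues]
  nlinarith [vecNormSq_nonneg (Xᴴ *ᵥ w)]

end SingularValues

section Kraus

variable {n κ : Type*} [Fintype n] [Fintype κ] (A : κ → Matrix n n ℂ)

/-- The hypothesis is `∑ i, A i * (A i)ᴴ ≤ β` in the Loewner order, which makes `β` a bound on the
squared norm of the row operator `[A₁ ⋯ Aₖ]`. -/
lemma vecNormSq_sum_mulVec_le {β : ℝ} (hβ : 0 ≤ β)
    (hA : ∀ w, ∑ i, vecNormSq ((A i)ᴴ *ᵥ w) ≤ β * vecNormSq w) (u : κ → n → ℂ) :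
    vecNormSq (∑ i, A i *ᵥ u i) ≤ β * ∑ i, vecNormSq (u i) := by
  set w := ∑ i, A i *ᵥ u i
  set U := ∑ i, vecNormSq (u i)
  have hU : 0 ≤ U := Finset.sum_nonneg fun i _ => vecNormSq_nonneg _
  have hw : 0 ≤ vecNormSq w := vecNormSq_nonneg w
  have hdot : star w ⬝ᵥ w = ∑ i, star ((A i)ᴴ *ᵥ w) ⬝ᵥ u i := by
    simp_rw [star_mulVec, conjTranspose_conjTranspose, ← dotProduct_mulVec]
    exact dotProduct_sum _ _ _
  have hcs : vecNormSq w ≤ √(β * vecNormSq w) * √U :=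
    calc vecNormSq w = (star w ⬝ᵥ w).re := by simp [star_dotProduct_self_eq_vecNormSq]
      _ ≤ ∑ i, ‖star ((A i)ᴴ *ᵥ w) ⬝ᵥ u i‖ :=
          hdot ▸ (Complex.re_le_norm _).trans (norm_sum_le _ _)
      _ ≤ ∑ i, √(vecNormSq ((A i)ᴴ *ᵥ w)) * √(vecNormSq (u i)) :=
          Finset.sum_le_sum fun i _ => norm_star_dotProduct_le _ _
      _ ≤ √(∑ i, vecNormSq ((A i)ᴴ *ᵥ w)) * √U :=
          Real.sum_sqrt_mul_sqrt_le _ (fun i => vecNormSq_nonneg _) fun i => vecNormSq_nonneg _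
      _ ≤ √(β * vecNormSq w) * √U := by gcongr; exact hA w
  rw [← Real.sqrt_mul (by positivity), Real.le_sqrt hw (by positivity)] at hcs
  nlinarith [mul_nonneg hβ hU]

variable [DecidableEq n]

lemma sum_frobNormSq_mul_conjTranspose (hTP : ∑ i, (A i)ᴴ * A i = 1) (M : Matrix n n ℂ) :
    ∑ i, frobNormSq (M * (A i)ᴴ) = frobNormSq M := by
  have h : ∑ i, ((frobNormSq (M * (A i)ᴴ) : ℝ) : ℂ) = frobNormSq M := by
    simp_rw [frobNormSq_eq_trace, conjTranspose_mul, conjTranspose_conjTranspose, ← trace_sum,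
      ← mul_assoc, ← Finset.sum_mul, mul_assoc, ← Finset.mul_sum, hTP, mul_one]
  exact_mod_cast h

lemma frobNormSq_kraus_le {β : ℝ} (hβ : 0 ≤ β)
    (hA : ∀ w, ∑ i, vecNormSq ((A i)ᴴ *ᵥ w) ≤ β * vecNormSq w)
    (hTP : ∑ i, (A i)ᴴ * A i = 1) (M : Matrix n n ℂ) :
    frobNormSq (∑ i, A i * M * (A i)ᴴ) ≤ β * frobNormSq M := by
  have hcol (b : n) : (fun a => (∑ i, A i * M * (A i)ᴴ) a b) =
      ∑ i, A i *ᵥ fun s => (M * (A i)ᴴ) s b := by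
    ext a
    simp only [Matrix.sum_apply, Finset.sum_apply, mul_assoc]
    rfl
  calc frobNormSq (∑ i, A i * M * (A i)ᴴ)
      = ∑ b, vecNormSq (∑ i, A i *ᵥ fun s => (M * (A i)ᴴ) s b) := by
        simp_rw [frobNormSq_eq_sum_vecNormSq_col, hcol]
    _ ≤ ∑ b, β * ∑ i, vecNormSq fun s => (M * (A i)ᴴ) s b :=
        Finset.sum_le_sum fun b _ => vecNormSq_sum_mulVec_le A hβ hA _
    _ = β * frobNormSq M := by
        simp_rw [← Finset.mul_sum, ← sum_frobNormSq_mul_conjTranspose A hTP M,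
          frobNormSq_eq_sum_vecNormSq_col]
        rw [Finset.sum_comm]

lemma sum_frobNormSq_of_trace_preserving (hTP : ∑ i, (A i)ᴴ * A i = 1) :
    ∑ i, frobNormSq (A i) = Fintype.card n := by
  have h := sum_frobNormSq_mul_conjTranspose A hTP 1
  simp_rw [one_mul, frobNormSq_conjTranspose] at h
  rw [h]
  simp [frobNormSq, one_apply, apply_ite]

lemma sum_vecNormSq_conjTranspose_mulVec_le_card (hTP : ∑ i, (A i)ᴴ * A i = 1) (w : n → ℂ) :
    ∑ i, vecNormSq ((A i)ᴴ *ᵥ w) ≤ Fintype.card n * vecNormSq w :=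
  calc ∑ i, vecNormSq ((A i)ᴴ *ᵥ w) ≤ ∑ i, frobNormSq (A i)ᴴ * vecNormSq w :=
        Finset.sum_le_sum fun i _ => vecNormSq_mulVec_le _ _
    _ = Fintype.card n * vecNormSq w := by
        simp_rw [frobNormSq_conjTranspose, ← Finset.sum_mul, sum_frobNormSq_of_trace_preserving A hTP]

lemma sum_vecNormSq_conjTranspose_mulVec_of_unital (hU : ∑ i, A i * (A i)ᴴ = 1) (w : n → ℂ) :
    ∑ i, vecNormSq ((A i)ᴴ *ᵥ w) = vecNormSq w := by
  have h : ∑ i, ((vecNormSq ((A i)ᴴ *ᵥ w) : ℝ) : ℂ) = vecNormSq w := by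
    simp_rw [← star_dotProduct_mul_conjTranspose_mulVec, ← dotProduct_sum, ← sum_mulVec, hU,
      one_mulVec, star_dotProduct_self_eq_vecNormSq]
  exact_mod_cast h

end Kraus

section Channel

variable {N k : ℕ} {Φ : Matrix (Fin N) (Fin N) ℂ →ₗ[ℂ] Matrix (Fin N) (Fin N) ℂ}
  {A : Fin k → Matrix (Fin N) (Fin N) ℂ}

lemma choiMatrix_apply_of_kraus (hK : ∀ ρ, Φ ρ = ∑ i, A i * ρ * (A i)ᴴ) (p q : Fin N × Fin N) :
    choiMatrix Φ p q = ∑ i, A i p.1 p.2 * star (A i q.1 q.2) := by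
  simp [choiMatrix, hK, Matrix.sum_apply, mul_apply, single, ite_and]

lemma posSemidef_choiMatrix_of_kraus (hK : ∀ ρ, Φ ρ = ∑ i, A i * ρ * (A i)ᴴ) :
    (choiMatrix Φ).PosSemidef := by
  let B : Matrix (Fin k) (Fin N × Fin N) ℂ := of fun i p => star (A i p.1 p.2)
  have hB : choiMatrix Φ = Bᴴ * B := by
    ext p q
    simp [choiMatrix_apply_of_kraus hK, mul_apply, B]
  exact hB ▸ posSemidef_conjTranspose_mul_self B

lemma trace_choiMatrix_of_kraus (hK : ∀ ρ, Φ ρ = ∑ i, A i * ρ * (A i)ᴴ)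
    (hTP : ∑ i, (A i)ᴴ * A i = 1) : (choiMatrix Φ).trace = N := by
  have h : (choiMatrix Φ).trace = ∑ i, ((frobNormSq (A i) : ℝ) : ℂ) := by
    simp [trace, choiMatrix_apply_of_kraus hK, frobNormSq, Complex.mul_conj',
      Fintype.sum_prod_type, Finset.sum_comm (γ := Fin k)]
  rw [h, ← Complex.ofReal_sum, sum_frobNormSq_of_trace_preserving A hTP]
  simp

lemma frobNormSq_superMatrix :
    frobNormSq (superMatrix Φ) = frobNormSq (choiMatrix Φ) := by
  simp only [frobNormSq, superMatrix, choiMatrix, Fintype.sum_prod_type]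
  exact Finset.sum_congr rfl fun _ _ => Finset.sum_comm

lemma vecNormSq_superMatrix_mulVec (v : Fin N × Fin N → ℂ) :
    vecNormSq (superMatrix Φ *ᵥ v) = frobNormSq (Φ (of fun a b => v (a, b))) := by
  have hv : (of fun a b => v (a, b)) = ∑ q : Fin N × Fin N, v q • single q.1 q.2 1 := by
    ext a b
    simp [Matrix.sum_apply, single, Fintype.sum_prod_type, ite_and]
  rw [hv, map_sum]
  simp only [map_smul]
  simp [vecNormSq, frobNormSq, Fintype.sum_prod_type, mulVec, dotProduct, superMatrix,
    Matrix.sum_apply, mul_comm]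

lemma sq_singularValues_superMatrix_le (hK : ∀ ρ, Φ ρ = ∑ i, A i * ρ * (A i)ᴴ)
    (hTP : ∑ i, (A i)ᴴ * A i = 1) {β : ℝ} (hβ : 0 ≤ β)
    (hA : ∀ w, ∑ i, vecNormSq ((A i)ᴴ *ᵥ w) ≤ β * vecNormSq w) (p : Fin N × Fin N) :
    singularValues (superMatrix Φ) p ^ 2 ≤ β := by
  refine sq_singularValues_le hβ (fun v => ?_) p
  have hv : vecNormSq v = frobNormSq (of fun a b => v (a, b)) := by
    simp [vecNormSq, frobNormSq, Fintype.sum_prod_type]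
  rw [vecNormSq_superMatrix_mulVec, hK, hv]
  exact frobNormSq_kraus_le A hβ hA hTP _

end Channel

section Renyi

variable {ι : Type*} [Fintype ι] {p : ι → ℝ} {q : ℝ}

lemma sum_rpow_le_sum_sq_rpow_half (hq : 2 ≤ q) (hp : ∀ i, 0 ≤ p i) :
    ∑ i, p i ^ q ≤ (∑ i, p i ^ 2) ^ (q / 2) := by
  set s := ∑ i, p i ^ 2
  have hs : 0 ≤ s := by positivity
  have hps (i : ι) : p i ≤ √s :=
    Real.le_sqrt_of_sq_le (Finset.single_le_sum (fun j _ => sq_nonneg (p j)) (Finset.mem_univ i))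
  calc ∑ i, p i ^ q = ∑ i, p i ^ 2 * p i ^ (q - 2) := by
        refine Finset.sum_congr rfl fun i _ => ?_
        rw [← Real.rpow_natCast, ← Real.rpow_add' (hp i) (by push_cast; linarith)]
        norm_num
    _ ≤ ∑ i, p i ^ 2 * √s ^ (q - 2) := by
        gcongr with i
        exacts [hp i, hps i]
    _ = s ^ (q / 2) := by
        rw [← Finset.sum_mul, Real.sqrt_eq_rpow, ← Real.rpow_mul hs, ← Real.rpow_one_add' hs]
        · ring_nf
        · linarith

/-- Jensen's inequality for `t ↦ t ^ (q - 1)⁻¹`, with weights `p i` at the points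
`p i ^ (q - 1)`. -/
lemma sum_rpow_le_sum_sq_rpow_sub_one (hq : 1 < q) (hq2 : q ≤ 2) (hp : ∀ i, 0 ≤ p i)
    (hp1 : ∑ i, p i = 1) :
    ∑ i, p i ^ q ≤ (∑ i, p i ^ 2) ^ (q - 1) := by
  have hq1 : q - 1 ≠ 0 := by linarith
  have hpq (i : ι) : p i * p i ^ (q - 1) = p i ^ q := by
    rw [← Real.rpow_one_add' (hp i) (by linarith)]
    ring_nf
  have hjensen := Real.rpow_arith_mean_le_arith_mean_rpow Finset.univ p (fun i => p i ^ (q - 1))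
    (fun i _ => hp i) hp1 (fun i _ => Real.rpow_nonneg (hp i) _)
    (p := (q - 1)⁻¹) (one_le_inv₀ (by linarith) |>.mpr (by linarith))
  simp only [hpq, Real.rpow_rpow_inv (hp _) hq1, ← sq] at hjensen
  have hsum : 0 ≤ ∑ i, p i ^ q := Finset.sum_nonneg fun i _ => Real.rpow_nonneg (hp i) q
  calc ∑ i, p i ^ q = ((∑ i, p i ^ q) ^ (q - 1)⁻¹) ^ (q - 1) :=
        (Real.rpow_inv_rpow hsum hq1).symm
    _ ≤ (∑ i, p i ^ 2) ^ (q - 1) := by gcongr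

lemma sum_rpow_le_sum_sq_rpow_min (hq : 1 < q) (hp : ∀ i, 0 ≤ p i) (hp1 : ∑ i, p i = 1) :
    ∑ i, p i ^ q ≤ (∑ i, p i ^ 2) ^ min (q / 2) (q - 1) := by
  rcases le_total 2 q with hq2 | hq2
  · rw [min_eq_left (by linarith)]
    exact sum_rpow_le_sum_sq_rpow_half hq2 hp
  · rw [min_eq_right (by linarith)]
    exact sum_rpow_le_sum_sq_rpow_sub_one hq hq2 hp hp1

/-- `log ((∑ v)² / ∑ v²)` is the collision entropy `H₂` of the normalization of `v`. -/
theorem half_min_mul_log_le_renyiH {v : ι → ℝ} (hq : 1 < q) (hv : ∀ i, 0 ≤ v i)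
    (hT : 0 < ∑ i, v i) :
    min (q / (q - 1)) 2 / 2 * Real.log ((∑ i, v i) ^ 2 / ∑ i, v i ^ 2) ≤ renyiH q v := by
  set T := ∑ i, v i
  set p : ι → ℝ := fun i => v i / T
  have hp (i : ι) : 0 ≤ p i := div_nonneg (hv i) hT.le
  have hp1 : ∑ i, p i = 1 := by rw [← Finset.sum_div, div_self hT.ne']
  obtain ⟨i₀, -, hi₀⟩ := (Finset.sum_pos_iff_of_nonneg fun i _ => hv i).1 hT
  have hpi₀ : 0 < p i₀ := div_pos hi₀ hT
  have hsq_pos : 0 < ∑ i, p i ^ 2 :=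
    Finset.sum_pos' (fun i _ => sq_nonneg _) ⟨i₀, Finset.mem_univ _, by positivity⟩
  have hrpow_pos : 0 < ∑ i, p i ^ q :=
    Finset.sum_pos' (fun i _ => Real.rpow_nonneg (hp i) q)
      ⟨i₀, Finset.mem_univ _, Real.rpow_pos_of_pos hpi₀ q⟩
  have hsq : (∑ i, v i ^ 2) / T ^ 2 = ∑ i, p i ^ 2 := by
    simp_rw [Finset.sum_div, p, div_pow]
  have hq1 : q - 1 ≠ 0 := (sub_pos.mpr hq).ne'
  have hF : min (q / (q - 1)) 2 / 2 = min (q / 2) (q - 1) / (q - 1) := by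
    rw [← min_div_div_right (by norm_num), ← min_div_div_right (by linarith)]
    congr 1 <;> field_simp
  calc min (q / (q - 1)) 2 / 2 * Real.log (T ^ 2 / ∑ i, v i ^ 2)
      = 1 / (1 - q) * (min (q / 2) (q - 1) * Real.log (∑ i, p i ^ 2)) := by
        rw [hF, ← inv_div (∑ i, v i ^ 2), Real.log_inv, hsq, show 1 - q = -(q - 1) by ring]
        field_simp
    _ ≤ 1 / (1 - q) * Real.log (∑ i, p i ^ q) := by
        refine mul_le_mul_of_nonpos_left ?_ (by rw [one_div_nonpos]; linarith)
        rw [← Real.log_rpow hsq_pos]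
        exact Real.log_le_log hrpow_pos (sum_rpow_le_sum_sq_rpow_min hq hp hp1)
    _ = renyiH q v := rfl

end Renyi

/-- With `c = ∑ d² = ∑ x²`, the collision entropies are `log ((∑ d)² / c)` and at least
`log (c / β)`, because `c ≤ √β ∑ x`. -/
theorem half_min_mul_log_le_renyiH_add_renyiH {ι κ : Type*} [Fintype ι] [Fintype κ] {q β : ℝ}
    {d : ι → ℝ} {x : κ → ℝ} (hq : 1 < q) (hβ : 0 < β) (hd : ∀ i, 0 ≤ d i) (hx : ∀ j, 0 ≤ x j)
    (hd_pos : 0 < ∑ i, d i) (hdx : ∑ i, d i ^ 2 = ∑ j, x j ^ 2) (hxβ : ∀ j, x j ^ 2 ≤ β) :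
    min (q / (q - 1)) 2 / 2 * Real.log ((∑ i, d i) ^ 2 / β) ≤ renyiH q d + renyiH q x := by
  set c := ∑ i, d i ^ 2
  have hc : 0 < c := by
    obtain ⟨i, -, hi⟩ := (Finset.sum_pos_iff_of_nonneg fun i _ => hd i).1 hd_pos
    exact Finset.sum_pos' (fun i _ => sq_nonneg _) ⟨i, Finset.mem_univ _, by positivity⟩
  have hcx : c ≤ √β * ∑ j, x j := by
    rw [hdx, Finset.mul_sum]
    refine Finset.sum_le_sum fun j _ => ?_
    rw [sq]
    exact mul_le_mul_of_nonneg_right (Real.le_sqrt_of_sq_le (hxβ j)) (hx j)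
  have hx_pos : 0 < ∑ j, x j := pos_of_mul_pos_right (hc.trans_le hcx) (Real.sqrt_nonneg β)
  have hcβ : c / β ≤ (∑ j, x j) ^ 2 / c := by
    rw [div_le_div_iff₀ hβ hc, ← sq]
    calc c ^ 2 ≤ (√β * ∑ j, x j) ^ 2 := by gcongr
      _ = (∑ j, x j) ^ 2 * β := by rw [mul_pow, Real.sq_sqrt hβ.le, mul_comm]
  have hF : 0 ≤ min (q / (q - 1)) 2 / 2 := by
    have : 0 < q - 1 := by linarith
    positivity
  calc min (q / (q - 1)) 2 / 2 * Real.log ((∑ i, d i) ^ 2 / β)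
      = min (q / (q - 1)) 2 / 2 * Real.log ((∑ i, d i) ^ 2 / c)
        + min (q / (q - 1)) 2 / 2 * Real.log (c / β) := by
        rw [← mul_add, ← Real.log_mul (by positivity) (by positivity), div_mul_div_cancel₀ hc.ne']
    _ ≤ renyiH q d + renyiH q x := by
        gcongr
        · exact half_min_mul_log_le_renyiH hq hd hd_pos
        · refine le_trans ?_ (half_min_mul_log_le_renyiH hq hx hx_pos)
          rw [← hdx]
          gcongr

theorem renyi_tradeoff {N : ℕ} (hN : 0 < N)
    (Φ : Matrix (Fin N) (Fin N) ℂ →ₗ[ℂ] Matrix (Fin N) (Fin N) ℂ) (hΦ : IsCPTP Φ) (q : ℝ) (hq : 1 < q) :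
    (min (q / (q - 1)) 2 / 2) * Real.log N
        ≤ renyiH q (singularValues (choiMatrix Φ))
          + renyiH q (singularValues (superMatrix Φ)) ∧
    (Φ 1 = 1 →
      min (q / (q - 1)) 2 * Real.log N
        ≤ renyiH q (singularValues (choiMatrix Φ))
          + renyiH q (singularValues (superMatrix Φ))) := by
  obtain ⟨k, A, hK, hTP⟩ := hΦ
  have hNpos : (0 : ℝ) < N := Nat.cast_pos.mpr hN
  have hsum : ∑ p, singularValues (choiMatrix Φ) p = N := by
    rw [sum_singularValues_of_posSemidef (posSemidef_choiMatrix_of_kraus hK),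
      trace_choiMatrix_of_kraus hK hTP]
    simp
  have tradeoff (β : ℝ) (hβ : 0 < β)
      (hA : ∀ w, ∑ i, vecNormSq ((A i)ᴴ *ᵥ w) ≤ β * vecNormSq w) :
      min (q / (q - 1)) 2 / 2 * Real.log ((N : ℝ) ^ 2 / β)
        ≤ renyiH q (singularValues (choiMatrix Φ)) + renyiH q (singularValues (superMatrix Φ)) := by
    rw [← hsum]
    refine half_min_mul_log_le_renyiH_add_renyiH hq hβ (singularValues_nonneg _)
      (singularValues_nonneg _) (hsum ▸ hNpos) ?_ (sq_singularValues_superMatrix_le hK hTP hβ.le hA)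
    simp_rw [sum_sq_singularValues, frobNormSq_superMatrix]
  constructor
  · have h := tradeoff N hNpos
      (by simpa using sum_vecNormSq_conjTranspose_mulVec_le_card A hTP)
    rwa [sq, mul_div_cancel_right₀ _ hNpos.ne'] at h
  · intro hU
    have hunital : ∑ i, A i * (A i)ᴴ = 1 := by simpa [hK] using hU
    have h := tradeoff 1 one_pos
      (by simp [sum_vecNormSq_conjTranspose_mulVec_of_unital A hunital])
    rw [div_one, Real.log_pow] at h
    linarith

end
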